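/- arXiv:2407.15307 — 4 statements merged into one kernel-verified Lean document; each statement's English description precedes it below -/
import Mathlib

section
/- For a connected graph G of order n ≥ 2, eqdim(G) = n − 1 if and only if G is the path of order 2. -/
/-!
The complement of two vertices with a common neighbour `x` is a distance-equalizer set,
since `x` is at distance one from both of them. A connected graph on
at least three vertices has such a pair, so its equidistant dimension is at most `n - 2`.
On two vertices the only connected graph is `K₂ = P₂`, whose equidistant dimension is `1`.
-/

/-- `S` is a distance-equalizer set of `G`. -/
def IsDistEqSet {V : Type*} (G : SimpleGraph V) (S : Set V) : Prop :=
  ∀ u v : V, u ∉ S → v ∉ S → u ≠ v → ∃ x ∈ S, G.dist u x = G.dist v x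

/-- The equidistant dimension of `G`. -/
noncomputable def eqdim {V : Type*} (G : SimpleGraph V) : ℕ :=
  sInf {k | ∃ S : Finset V, IsDistEqSet G ↑S ∧ S.card = k}

open SimpleGraph

section DistEqSet

variable {V : Type*} {G : SimpleGraph V}

lemma isDistEqSet_univ : IsDistEqSet G Set.univ :=
  fun u _ hu _ _ ↦ absurd (Set.mem_univ u) hu

lemma not_isDistEqSet_empty [Nontrivial V] : ¬ IsDistEqSet G ∅ := by
  obtain ⟨u, v, huv⟩ := exists_pair_ne V
  intro h
  obtain ⟨x, hx, -⟩ := h u v (Set.notMem_empty u) (Set.notMem_empty v) huv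
  exact Set.notMem_empty x hx

lemma isDistEqSet_compl_singleton (a : V) : IsDistEqSet G {a}ᶜ := by
  intro u v hu hv huv
  rw [Set.notMem_compl_iff, Set.mem_singleton_iff] at hu hv
  exact absurd (hu.trans hv.symm) huv

lemma isDistEqSet_compl_pair {x y z : V} (hxy : x ≠ y) (hxz : x ≠ z)
    (hdist : G.dist y x = G.dist z x) : IsDistEqSet G {y, z}ᶜ := by
  intro u v hu hv huv
  refine ⟨x, by simp [hxy, hxz], ?_⟩
  simp only [Set.notMem_compl_iff, Set.mem_insert_iff, Set.mem_singleton_iff] at hu hv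
  rcases hu with rfl | rfl <;> rcases hv with rfl | rfl
  all_goals first | exact absurd rfl huv | exact hdist | exact hdist.symm

lemma eqdim_le_card_of_isDistEqSet {S : Finset V} (hS : IsDistEqSet G S) : eqdim G ≤ S.card :=
  Nat.sInf_le ⟨S, hS, rfl⟩

end DistEqSet

section Eqdim

variable {V : Type*} [Fintype V] {G : SimpleGraph V}

lemma one_le_eqdim [Nontrivial V] : 1 ≤ eqdim G := by
  classical
  refine le_csInf ⟨_, Finset.univ, by simpa using isDistEqSet_univ, rfl⟩ ?_
  rintro _ ⟨S, hS, rfl⟩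
  rw [Nat.one_le_iff_ne_zero, Ne, Finset.card_eq_zero]
  rintro rfl
  exact not_isDistEqSet_empty (by simpa using hS)

lemma eqdim_le_card_sub_one [Nonempty V] : eqdim G ≤ Fintype.card V - 1 := by
  classical
  obtain ⟨a⟩ := ‹Nonempty V›
  simpa [Finset.card_compl] using
    eqdim_le_card_of_isDistEqSet (S := {a}ᶜ) (by simpa using isDistEqSet_compl_singleton a)

lemma eqdim_eq_one_of_card_eq_two (hV : Fintype.card V = 2) : eqdim G = 1 := by
  have : Nontrivial V := Fintype.one_lt_card_iff_nontrivial.mp (by omega)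
  have := eqdim_le_card_sub_one (G := G)
  have := one_le_eqdim (G := G)
  omega

lemma eqdim_le_card_sub_two_of_adj_of_adj {x y z : V} (hxy : G.Adj x y) (hxz : G.Adj x z)
    (hyz : y ≠ z) : eqdim G ≤ Fintype.card V - 2 := by
  classical
  have hdist : G.dist y x = G.dist z x := by
    rw [dist_eq_one_iff_adj.mpr hxy.symm, dist_eq_one_iff_adj.mpr hxz.symm]
  have hS : IsDistEqSet G ↑({y, z}ᶜ : Finset V) := by
    rw [Finset.coe_compl, Finset.coe_pair]
    exact isDistEqSet_compl_pair hxy.ne hxz.ne hdist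
  simpa only [Finset.card_compl, Finset.card_pair hyz] using eqdim_le_card_of_isDistEqSet hS

end Eqdim

namespace SimpleGraph.Preconnected

variable {V : Type*} [Fintype V] {G : SimpleGraph V}

lemma exists_adj_adj_ne (hG : G.Preconnected) (hV : 2 < Fintype.card V) :
    ∃ x y z, G.Adj x y ∧ G.Adj x z ∧ y ≠ z := by
  classical
  have : Nontrivial V := Fintype.one_lt_card_iff_nontrivial.mp (by omega)
  obtain ⟨a⟩ : Nonempty V := inferInstance
  obtain ⟨b, hab⟩ := hG.exists_adj_of_nontrivial a
  obtain ⟨c, -, hc⟩ := Finset.exists_mem_notMem_of_card_lt_card (s := {a, b}) (t := .univ)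
    ((Finset.card_le_two).trans_lt (by simpa using hV))
  -- a walk from the edge `ab` to `c` must leave `{a, b}` along some edge
  obtain ⟨d, -, hd, hd'⟩ := (hG a c).some.exists_boundary_dart {a, b} (by simp) (by simpa using hc)
  simp only [Set.mem_insert_iff, Set.mem_singleton_iff, not_or] at hd hd'
  rcases hd with hda | hdb
  · exact ⟨a, b, d.snd, hab, hda ▸ d.adj, fun h ↦ hd'.2 h.symm⟩
  · exact ⟨b, a, d.snd, hab.symm, hdb ▸ d.adj, fun h ↦ hd'.1 h.symm⟩

lemma eq_top_of_card_eq_two (hG : G.Preconnected) (hV : Fintype.card V = 2) : G = ⊤ := by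
  have : Nontrivial V := Fintype.one_lt_card_iff_nontrivial.mp (by omega)
  ext u v
  refine ⟨Adj.ne, fun huv ↦ ?_⟩
  obtain ⟨w, huw⟩ := hG.exists_adj_of_nontrivial u
  obtain rfl : w = v := by
    by_contra hwv
    have := Fintype.two_lt_card_iff.mpr ⟨u, v, w, huv, huw.ne, Ne.symm hwv⟩
    omega
  exact huw

lemma nonempty_iso_pathGraph_two_iff (hG : G.Preconnected) :
    Nonempty (G ≃g pathGraph 2) ↔ Fintype.card V = 2 := by
  refine ⟨fun ⟨e⟩ ↦ by simpa using Fintype.card_congr e.toEquiv, fun hV ↦ ?_⟩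
  rw [hG.eq_top_of_card_eq_two hV, pathGraph_two_eq_top]
  exact ⟨Iso.completeGraph (Fintype.equivFinOfCardEq hV)⟩

end SimpleGraph.Preconnected

theorem stmt3 {V : Type*} [Fintype V] (G : SimpleGraph V)
    (hconn : G.Connected) (hn : 2 ≤ Fintype.card V) :
    eqdim G = Fintype.card V - 1 ↔ Nonempty (G ≃g (SimpleGraph.pathGraph 2)) := by
  rw [hconn.preconnected.nonempty_iso_pathGraph_two_iff]
  refine ⟨fun h ↦ ?_, fun hV ↦ by rw [eqdim_eq_one_of_card_eq_two hV, hV]⟩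
  by_contra hV
  obtain ⟨x, y, z, hxy, hxz, hyz⟩ := hconn.preconnected.exists_adj_adj_ne (by omega)
  have := eqdim_le_card_sub_two_of_adj_of_adj hxy hxz hyz
  omega
end

section
/- For every connected graph G of order n ≥ 2 that is not a complete graph, eqdim(G) ≤ n − ω(G), where ω(G) is the clique number of G. -/
/-!
Take a maximum clique `W`. Since `G` is connected and not complete, some edge `ua` leaves `W`,
with `u ∈ W`. Swapping `u` for `a` gives a set `T` of `ω(G)` vertices, all adjacent to `u`.
Every two vertices of `T` are then at distance one from `u ∉ T`, so `V \ T` is a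
distance-equalizer set of size `n - ω(G)`.
-/

open Finset

namespace SimpleGraph

variable {V : Type*} {G : SimpleGraph V}

theorem Connected.exists_adj_of_mem_of_notMem (hconn : G.Connected) {s : Set V} {w b : V}
    (hw : w ∈ s) (hb : b ∉ s) : ∃ u ∈ s, ∃ a ∉ s, G.Adj u a := by
  obtain ⟨d, -, hd, hd'⟩ := (hconn.preconnected w b).some.exists_boundary_dart s hw hb
  exact ⟨d.fst, hd, d.snd, hd', d.adj⟩

theorem insert_erase_subset_neighborSet_of_isClique [DecidableEq V] {s : Finset V} {u a : V}
    (hs : G.IsClique (s : Set V)) (hu : u ∈ s) (ha : G.Adj u a) :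
    (↑(insert a (s.erase u)) : Set V) ⊆ G.neighborSet u := by
  intro x hx
  simp only [coe_insert, coe_erase, Set.mem_insert_iff, Set.mem_sdiff,
    Set.mem_singleton_iff] at hx
  rcases hx with rfl | ⟨hxs, hxu⟩
  · exact ha
  · exact hs hu hxs (Ne.symm hxu)

theorem one_le_cliqueNum [Finite V] [Nonempty V] : 1 ≤ G.cliqueNum := by
  have hx : G.IsClique ({Classical.arbitrary V} : Finset V) := by simp
  simpa using hx.card_le_cliqueNum

theorem Connected.exists_card_eq_cliqueNum_subset_neighborSet [Finite V]
    (hconn : G.Connected) (hG : G ≠ ⊤) :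
    ∃ u, ∃ T : Finset V, #T = G.cliqueNum ∧ (T : Set V) ⊆ G.neighborSet u := by
  classical
  obtain ⟨W, hW⟩ := G.exists_isNClique_cliqueNum
  obtain ⟨b, hb⟩ : ∃ b, b ∉ (W : Set V) := by
    by_contra! h
    exact hG (isClique_univ.mp (Set.eq_univ_iff_forall.mpr h ▸ hW.isClique))
  have := hconn.nonempty
  obtain ⟨w, hw⟩ : W.Nonempty := by
    rw [← card_pos, hW.card_eq]
    exact one_le_cliqueNum
  obtain ⟨u, hu, a, ha, hua⟩ := hconn.exists_adj_of_mem_of_notMem (mem_coe.mpr hw) hb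
  refine ⟨u, insert a (W.erase u), ?_,
    insert_erase_subset_neighborSet_of_isClique hW.isClique hu hua⟩
  rw [card_insert_of_notMem (fun h ↦ ha (mem_of_mem_erase h)), card_erase_add_one hu,
    hW.card_eq]

end SimpleGraph

open SimpleGraph

theorem isDistEqSet_compl_of_subset_neighborSet {V : Type*} {G : SimpleGraph V} {u : V}
    {T : Set V} (hT : T ⊆ G.neighborSet u) : IsDistEqSet G Tᶜ := by
  have hdist : ∀ x ∈ T, G.dist x u = 1 := fun x hx ↦
    dist_comm.trans (dist_eq_one_iff_adj.mpr (hT hx))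
  intro x y hx hy _
  refine ⟨u, fun hu ↦ G.irrefl (hT hu), ?_⟩
  rw [hdist x (not_not.mp hx), hdist y (not_not.mp hy)]

theorem eqdim_le_card {V : Type*} {G : SimpleGraph V} {S : Finset V}
    (hS : IsDistEqSet G S) : eqdim G ≤ #S :=
  Nat.sInf_le ⟨S, hS, rfl⟩

theorem stmt5_general {V : Type*} [Fintype V] (G : SimpleGraph V)
    (hconn : G.Connected) (hG : G ≠ ⊤) :
    eqdim G ≤ Fintype.card V - G.cliqueNum := by
  classical
  obtain ⟨u, T, hcard, hT⟩ := hconn.exists_card_eq_cliqueNum_subset_neighborSet hG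
  have hS : IsDistEqSet G ↑Tᶜ := by
    rw [coe_compl]
    exact isDistEqSet_compl_of_subset_neighborSet hT
  calc eqdim G ≤ #Tᶜ := eqdim_le_card hS
    _ = Fintype.card V - G.cliqueNum := by rw [card_compl, hcard]

theorem stmt5 {V : Type*} [Fintype V] (G : SimpleGraph V)
    (hconn : G.Connected) (hn : 2 ≤ Fintype.card V) (hG : G ≠ ⊤) :
    eqdim G ≤ Fintype.card V - G.cliqueNum :=
  stmt5_general G hconn hG
end

section
/- For n ≥ 5, eqdim(S''_n) ≥ 2n. -/
/-- The convex polytope graph `S''_n` on vertex layers a=0, b=1, c=2, d=3. -/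
def S2Graph (n : ℕ) : SimpleGraph (Fin 4 × ZMod n) :=
  SimpleGraph.fromRel (fun x y =>
    (x.1 = y.1 ∧ y.2 = x.2 + 1) ∨
    (x.1 = 0 ∧ y.1 = 1 ∧ y.2 = x.2) ∨
    (x.1 = 1 ∧ y.1 = 2 ∧ y.2 = x.2) ∨
    (x.1 = 2 ∧ y.1 = 3 ∧ y.2 = x.2) ∨
    (x.1 = 1 ∧ y.1 = 2 ∧ x.2 = y.2 + 1))

open SimpleGraph Finset

variable {V W : Type*}

namespace SimpleGraph

/-- The potential `ι` pays for the step saved when `f` collapses an edge. -/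
def ContractsTo (G : SimpleGraph V) (G' : SimpleGraph W) (f : V → W) (ι : V → ℕ) : Prop :=
  ∀ ⦃u v⦄, G.Adj u v →
    (f u = f v ∧ ι u ≤ ι v + 1) ∨ (G'.Adj (f u) (f v) ∧ ι u ≤ ι v)

variable {G : SimpleGraph V} {G' : SimpleGraph W} {f : V → W} {ι : V → ℕ}

lemma ContractsTo.exists_walk {u v : V} (hf : G.ContractsTo G' f ι) (p : G.Walk u v) :
    ∃ q : G'.Walk (f u) (f v), q.length + ι u ≤ p.length + ι v := by
  induction p with
  | nil => exact ⟨.nil, le_rfl⟩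
  | cons h p ih =>
    obtain ⟨q, hq⟩ := ih
    rcases hf h with ⟨heq, hle⟩ | ⟨hadj, hle⟩
    · exact ⟨q.copy heq.symm rfl, by simp only [Walk.length_copy, Walk.length_cons]; omega⟩
    · exact ⟨.cons hadj q, by simp only [Walk.length_cons]; omega⟩

lemma ContractsTo.dist_add_le {u v : V} (hf : G.ContractsTo G' f ι) (h : G.Reachable u v) :
    G'.dist (f u) (f v) + ι u ≤ G.dist u v + ι v := by
  obtain ⟨p, hp⟩ := h.exists_walk_length_eq_dist
  obtain ⟨q, hq⟩ := hf.exists_walk p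
  have := dist_le q
  omega

lemma Hom.contractsTo (φ : G →g G') : G.ContractsTo G' φ 0 :=
  fun _ _ h => .inr ⟨φ.map_adj h, le_rfl⟩

lemma Hom.dist_le (φ : G →g G') {u v : V} (h : G.Reachable u v) :
    G'.dist (φ u) (φ v) ≤ G.dist u v := by
  simpa using φ.contractsTo.dist_add_le h

end SimpleGraph

lemma IsDistEqSet.mem_or_mem {G : SimpleGraph V} {S : Set V} (hS : IsDistEqSet G S) {u v : V}
    (huv : u ≠ v) (h : ∀ x, G.dist u x ≠ G.dist v x) : u ∈ S ∨ v ∈ S := by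
  by_contra! hc
  obtain ⟨x, -, hx⟩ := hS u v hc.1 hc.2 huv
  exact h x hx

lemma le_eqdim [Fintype V] {G : SimpleGraph V} {k : ℕ}
    (h : ∀ S : Finset V, IsDistEqSet G S → k ≤ #S) : k ≤ eqdim G :=
  le_csInf ⟨_, univ, fun u _ hu => absurd (mem_coe.2 (mem_univ u)) hu, rfl⟩
    (by rintro _ ⟨S, hS, rfl⟩; exact h S hS)

namespace S2Graph

variable {n : ℕ}

lemma adj_iff {u v : Fin 4 × ZMod n} : (S2Graph n).Adj u v ↔ u ≠ v ∧
    ((u.1 = v.1 ∧ v.2 = u.2 + 1) ∨ (u.1 = v.1 ∧ u.2 = v.2 + 1) ∨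
    (u.1 = 0 ∧ v.1 = 1 ∧ v.2 = u.2) ∨ (u.1 = 1 ∧ v.1 = 0 ∧ v.2 = u.2) ∨
    (u.1 = 1 ∧ v.1 = 2 ∧ v.2 = u.2) ∨ (u.1 = 2 ∧ v.1 = 1 ∧ v.2 = u.2) ∨
    (u.1 = 2 ∧ v.1 = 3 ∧ v.2 = u.2) ∨ (u.1 = 3 ∧ v.1 = 2 ∧ v.2 = u.2) ∨
    (u.1 = 1 ∧ v.1 = 2 ∧ u.2 = v.2 + 1) ∨ (u.1 = 2 ∧ v.1 = 1 ∧ v.2 = u.2 + 1)) := by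
  simp only [S2Graph, fromRel_adj]
  grind

lemma adj_layer (L : Fin 4) {i : ZMod n} (h : i + 1 ≠ i) : (S2Graph n).Adj (L, i) (L, i + 1) := by
  grind [adj_iff]

lemma adj_succ_fst (L : Fin 3) (i : ZMod n) : (S2Graph n).Adj (L.castSucc, i) (L.succ, i) := by
  rw [adj_iff]; fin_cases L <;> simp

lemma reachable_add_natCast (L : Fin 4) (i : ZMod n) (k : ℕ) :
    (S2Graph n).Reachable (L, i) (L, i + k) := by
  induction k with
  | zero => simp
  | succ k ih =>
    refine ih.trans ?_
    rw [Nat.cast_succ, ← add_assoc]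
    by_cases h : i + k + 1 = i + k
    · rw [h]
    · exact (adj_layer L h).reachable

lemma reachable_fst (L : Fin 4) (i : ZMod n) : (S2Graph n).Reachable (0, i) (L, i) := by
  induction L using Fin.induction with
  | zero => rfl
  | succ L ih => exact ih.trans (adj_succ_fst L i).reachable

lemma preconnected [NeZero n] : (S2Graph n).Preconnected := by
  rintro ⟨L, i⟩ ⟨L', j⟩
  have hij : (S2Graph n).Reachable (0, i) (0, j) := by
    simpa using reachable_add_natCast 0 i (j - i).val
  exact (reachable_fst L i).symm.trans (hij.trans (reachable_fst L' j))

def reflect : S2Graph n →g S2Graph n where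
  toFun v := (v.1.rev, -v.2)
  map_rel' {u v} h := by
    obtain ⟨L, i⟩ := u
    obtain ⟨L', j⟩ := v
    rw [adj_iff] at h ⊢
    fin_cases L <;> fin_cases L' <;> grind

lemma reflect_reflect (v : Fin 4 × ZMod n) : reflect (reflect v) = v := by
  simp [reflect]

lemma dist_reflect [NeZero n] (u v : Fin 4 × ZMod n) :
    (S2Graph n).dist (reflect u) (reflect v) = (S2Graph n).dist u v :=
  le_antisymm (reflect.dist_le (preconnected u v)) <| by
    simpa only [reflect_reflect] using reflect.dist_le (preconnected (reflect u) (reflect v))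

def foldA (v : Fin 4 × ZMod n) : Fin 4 × ZMod n := if v.1 = 0 then (1, v.2) else v

def projA (v : Fin 4 × ZMod n) : Fin 4 × ZMod n := (0, v.2)

lemma contractsTo_foldA :
    (S2Graph n).ContractsTo (S2Graph n) foldA (fun v => if v.1 = 0 then 1 else 0) := by
  rintro ⟨L, i⟩ ⟨L', j⟩ h
  rw [adj_iff] at h
  simp only [foldA, adj_iff]
  fin_cases L <;> fin_cases L' <;> grind

lemma contractsTo_projA :
    (S2Graph n).ContractsTo (S2Graph n) projA (fun v => if v.1 = 0 then 0 else 1) := by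
  rintro ⟨L, i⟩ ⟨L', j⟩ h
  rw [adj_iff] at h
  simp only [projA, adj_iff]
  fin_cases L <;> fin_cases L' <;> grind

lemma dist_zero_ne_dist_one [NeZero n] (i : ZMod n) (x : Fin 4 × ZMod n) :
    (S2Graph n).dist (0, i) x ≠ (S2Graph n).dist (1, i) x := by
  obtain ⟨L, j⟩ := x
  by_cases hL : L = 0
  · subst hL
    have := contractsTo_projA.dist_add_le (preconnected (1, i) (0, j))
    simp only [projA, if_true, one_ne_zero, if_false] at this
    omega
  · have := contractsTo_foldA.dist_add_le (preconnected (0, i) (L, j))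
    simp only [foldA, hL, if_true, if_false] at this
    omega

lemma dist_three_ne_dist_two [NeZero n] (i : ZMod n) (x : Fin 4 × ZMod n) :
    (S2Graph n).dist (3, i) x ≠ (S2Graph n).dist (2, i) x := by
  simpa [← dist_reflect _ x, reflect] using dist_zero_ne_dist_one (-i) (reflect x)

/-- The spoke `{a_i, b_i}` has index `(false, i)`, the spoke `{c_i, d_i}` index `(true, i)`. -/
def spokeIndex (v : Fin 4 × ZMod n) : Bool × ZMod n := (decide (2 ≤ v.1), v.2)

lemma surjOn_spokeIndex [NeZero n] {S : Set (Fin 4 × ZMod n)} (hS : IsDistEqSet (S2Graph n) S) :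
    Set.SurjOn spokeIndex S Set.univ := by
  rintro ⟨b, i⟩ -
  cases b
  · rcases hS.mem_or_mem (by simp) (dist_zero_ne_dist_one i) with h | h <;>
      exact ⟨_, h, by simp [spokeIndex]⟩
  · rcases hS.mem_or_mem (by simp) (dist_three_ne_dist_two i) with h | h <;>
      exact ⟨_, h, by simp [spokeIndex]⟩

end S2Graph

theorem stmt16 (n : ℕ) (hn : 5 ≤ n) : 2 * n ≤ eqdim (S2Graph n) := by
  have : NeZero n := ⟨by omega⟩
  refine le_eqdim fun S hS => ?_
  calc 2 * n = #(univ : Finset (Bool × ZMod n)) := by simp [two_mul]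
    _ ≤ #S := card_le_card_of_surjOn _ (by simpa using S2Graph.surjOn_spokeIndex hS)
end

section
/- For even n ≥ 6, the set S = {a_i, c_i : i = 0,…,n−1} is a distance-equalizer set of S''_n, and consequently eqdim(S''_n) = 2n. -/
/-!
The distance from `(r, i)` to `(s, k)` in `S''_n` is `|r - s|` plus a horizontal part: the cyclic
distance `|k - i|` when both vertices lie on the same side of the `b`–`c` layer, and
`min |k - i| |k - i + 1|` (with `i` the index of the upper vertex) when they lie on different
sides, because the diagonal edges `b_{i+1} c_i` make the crossing free in one direction. A
function vanishing on the diagonal that changes by at most one along edges and drops by one along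
some edge towards every target is the graph distance.

With this formula, two vertices of the rows `b`, `d` are equalized by a vertex of row `a` or `c`
at the midpoint of their indices; for `b_i` and `d_j` at odd index difference the antipodal
midpoint is needed, which exists because `n` is even. Conversely `a_i` and `b_i` (likewise `c_i`
and `d_i`) have distances differing by one to every vertex, so a distance-equalizer set meets each
of these `2n` disjoint pairs.
-/

namespace SimpleGraph

variable {V : Type*} {G : SimpleGraph V} {f : V → V → ℕ}

lemma Walk.le_length_of_lipschitz (hself : ∀ v, f v v = 0)
    (hlip : ∀ u w v, G.Adj u w → f u v ≤ f w v + 1) {u v : V} (p : G.Walk u v) :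
    f u v ≤ p.length := by
  induction p with
  | nil => simp [hself]
  | cons h _ ih => rw [Walk.length_cons]; exact (hlip _ _ _ h).trans (by omega)

lemma exists_walk_length_le_of_descent
    (hdesc : ∀ u v, u ≠ v → ∃ w, G.Adj u w ∧ f w v + 1 ≤ f u v) (u v : V) :
    ∃ p : G.Walk u v, p.length ≤ f u v := by
  induction h : f u v using Nat.strong_induction_on generalizing u with
  | _ m ih =>
  by_cases huv : u = v
  · subst huv
    exact ⟨Walk.nil, by simp⟩
  · obtain ⟨w, hw, hlt⟩ := hdesc u v huv
    obtain ⟨p, hp⟩ := ih (f w v) (by omega) w rfl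
    exact ⟨Walk.cons hw p, by rw [Walk.length_cons]; omega⟩

theorem dist_eq_of_lipschitz_of_descent (hself : ∀ v, f v v = 0)
    (hlip : ∀ u w v, G.Adj u w → f u v ≤ f w v + 1)
    (hdesc : ∀ u v, u ≠ v → ∃ w, G.Adj u w ∧ f w v + 1 ≤ f u v) (u v : V) :
    G.dist u v = f u v := by
  obtain ⟨p, hp⟩ := exists_walk_length_le_of_descent hdesc u v
  obtain ⟨q, hq⟩ := p.reachable.exists_walk_length_eq_dist
  have := q.le_length_of_lipschitz hself hlip
  have := dist_le p
  omega

end SimpleGraph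

namespace IsDistEqSet

variable {V : Type*} {G : SimpleGraph V}

lemma mem_or_mem_s17 {S : Set V} (hS : IsDistEqSet G S) {u v : V}
    (h : ∀ x, G.dist u x ≠ G.dist v x) : u ∈ S ∨ v ∈ S := by
  by_contra! ⟨hu, hv⟩
  obtain ⟨x, -, hx⟩ := hS u v hu hv fun huv => h u (by rw [huv])
  exact h x hx

lemma eqdim_eq {S : Finset V} (hS : IsDistEqSet G S)
    (hmin : ∀ T : Finset V, IsDistEqSet G T → S.card ≤ T.card) : eqdim G = S.card :=
  le_antisymm (Nat.sInf_le ⟨S, hS, rfl⟩)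
    (le_csInf ⟨_, S, hS, rfl⟩ (by rintro _ ⟨T, hT, rfl⟩; exact hmin T hT))

end IsDistEqSet

namespace ZMod

variable {n : ℕ}

lemma natAbs_valMinAbs_sub_comm (a b : ZMod n) :
    (a - b).valMinAbs.natAbs = (b - a).valMinAbs.natAbs := by
  rw [← natAbs_valMinAbs_neg, neg_sub]

lemma exists_eq_add_self_or_eq_add_self_add_one (t : ZMod n) :
    ∃ c, t = c + c ∨ t = c + c + 1 := by
  obtain ⟨z, rfl⟩ := intCast_surjective t
  obtain ⟨c, rfl | rfl⟩ := Int.even_or_odd' z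
  exacts [⟨c, Or.inl (by push_cast; ring)⟩, ⟨c, Or.inr (by push_cast; ring)⟩]

variable [NeZero n]

lemma natAbs_valMinAbs_one_le : (1 : ZMod n).valMinAbs.natAbs ≤ 1 := by
  rw [valMinAbs_natAbs_eq_min, val_one_eq_one_mod]
  exact (min_le_left _ _).trans (Nat.mod_le _ _)

lemma dist_natAbs_valMinAbs_add_one_le (t : ZMod n) :
    Nat.dist (t + 1).valMinAbs.natAbs t.valMinAbs.natAbs ≤ 1 := by
  have triangle (a b : ZMod n) :
      (a + b).valMinAbs.natAbs ≤ a.valMinAbs.natAbs + b.valMinAbs.natAbs :=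
    (natAbs_valMinAbs_add_le a b).trans (Int.natAbs_add_le _ _)
  have h₁ := triangle t 1
  have h₂ := triangle (t + 1) (-1)
  rw [add_neg_cancel_right, natAbs_valMinAbs_neg] at h₂
  have := natAbs_valMinAbs_one_le (n := n)
  unfold Nat.dist
  omega

lemma natAbs_valMinAbs_sub_one_or_add_one {t : ZMod n} (ht : t ≠ 0) :
    (t - 1).valMinAbs.natAbs + 1 = t.valMinAbs.natAbs ∨
      (t + 1).valMinAbs.natAbs + 1 = t.valMinAbs.natAbs := by
  have hmem := t.valMinAbs_mem_Ioc
  have hne : t.valMinAbs ≠ 0 := by rwa [Ne, valMinAbs_eq_zero]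
  simp only [Set.mem_Ioc] at hmem
  rcases lt_or_gt_of_ne hne with hneg | hpos
  · right
    rw [(valMinAbs_spec (t + 1) (t.valMinAbs + 1)).2 ⟨by push_cast [coe_valMinAbs]; rfl, by
      simp only [Set.mem_Ioc]; omega⟩]
    omega
  · left
    rw [(valMinAbs_spec (t - 1) (t.valMinAbs - 1)).2 ⟨by push_cast [coe_valMinAbs]; rfl, by
      simp only [Set.mem_Ioc]; omega⟩]
    omega

lemma natAbs_valMinAbs_natCast {m : ℕ} (hm : m ≤ n) :
    (m : ZMod n).valMinAbs.natAbs = min m (n - m) := by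
  rcases hm.lt_or_eq with hlt | rfl
  · rw [valMinAbs_natAbs_eq_min, val_natCast_of_lt hlt]
  · simp

end ZMod

namespace S2Graph

open ZMod

variable {n : ℕ}

/-- The horizontal distance from `b_i` to `c_{i + t}`: the crossing edges are `b_i c_i` and
`b_i c_{i - 1}`. -/
def bridgeDist (t : ZMod n) : ℕ := min t.valMinAbs.natAbs (t + 1).valMinAbs.natAbs

/-- The closed form of the distance; rows `0, 1` (`a`, `b`) form the upper side. -/
def potential (u v : Fin 4 × ZMod n) : ℕ :=
  Nat.dist u.1 v.1 +
    if (u.1.val < 2 ↔ v.1.val < 2) then (v.2 - u.2).valMinAbs.natAbs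
    else if u.1.val < 2 then bridgeDist (v.2 - u.2) else bridgeDist (u.2 - v.2)

lemma potential_self (u : Fin 4 × ZMod n) : potential u u = 0 := by
  simp [potential]

lemma potential_b_a (i k : ZMod n) :
    potential (1, i) (0, k) = 1 + (k - i).valMinAbs.natAbs := by
  simp [potential, Nat.dist]

lemma potential_b_c (i k : ZMod n) : potential (1, i) (2, k) = 1 + bridgeDist (k - i) := by
  simp [potential, Nat.dist]

lemma potential_d_a (i k : ZMod n) : potential (3, i) (0, k) = 3 + bridgeDist (i - k) := by
  simp [potential, Nat.dist]

lemma potential_d_c (i k : ZMod n) :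
    potential (3, i) (2, k) = 1 + (k - i).valMinAbs.natAbs := by
  simp [potential, Nat.dist]

lemma bridgeDist_neg_sub_one (t : ZMod n) : bridgeDist (-t - 1) = bridgeDist t := by
  rw [bridgeDist, bridgeDist, sub_add_cancel, ← neg_add', natAbs_valMinAbs_neg,
    natAbs_valMinAbs_neg, min_comm]

lemma adj_row [Fact (1 < n)] (r : Fin 4) (i : ZMod n) : (S2Graph n).Adj (r, i) (r, i + 1) := by
  simp [S2Graph]

lemma adj_ab (i : ZMod n) : (S2Graph n).Adj (0, i) (1, i) := by simp [S2Graph]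

lemma adj_bc (i : ZMod n) : (S2Graph n).Adj (1, i) (2, i) := by simp [S2Graph]

lemma adj_cd (i : ZMod n) : (S2Graph n).Adj (2, i) (3, i) := by simp [S2Graph]

lemma adj_bc_succ (i : ZMod n) : (S2Graph n).Adj (1, i + 1) (2, i) := by simp [S2Graph]

lemma dist_potential_ab (i : ZMod n) (v : Fin 4 × ZMod n) :
    Nat.dist (potential (0, i) v) (potential (1, i) v) = 1 := by
  obtain ⟨s, k⟩ := v
  have := s.isLt
  simp only [potential, Nat.dist, Fin.coe_ofNat_eq_mod, Nat.reduceMod]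
  split_ifs <;> omega

lemma dist_potential_cd (i : ZMod n) (v : Fin 4 × ZMod n) :
    Nat.dist (potential (2, i) v) (potential (3, i) v) = 1 := by
  obtain ⟨s, k⟩ := v
  have := s.isLt
  simp only [potential, Nat.dist, Fin.coe_ofNat_eq_mod, Nat.reduceMod]
  split_ifs <;> omega

lemma exists_adj_potential_lt_of_b {s : Fin 4} (hs : 2 ≤ s.val) (i k : ZMod n) :
    ∃ w, (S2Graph n).Adj (1, i) w ∧ potential w (s, k) + 1 ≤ potential (1, i) (s, k) := by
  have hadj := adj_bc_succ (i - 1)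
  rw [sub_add_cancel] at hadj
  have e : k - (i - 1) = k - i + 1 := by ring
  rcases min_choice (k - i).valMinAbs.natAbs (k - i + 1).valMinAbs.natAbs with h | h
  · refine ⟨(2, i), adj_bc i, ?_⟩
    simp only [potential, Nat.dist, bridgeDist, Fin.coe_ofNat_eq_mod, Nat.reduceMod]
    split_ifs <;> omega
  · refine ⟨(2, i - 1), hadj, ?_⟩
    simp only [potential, Nat.dist, bridgeDist, Fin.coe_ofNat_eq_mod, Nat.reduceMod, e]
    split_ifs <;> omega

lemma exists_adj_potential_lt_of_c {s : Fin 4} (hs : s.val < 2) (i k : ZMod n) :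
    ∃ w, (S2Graph n).Adj (2, i) w ∧ potential w (s, k) + 1 ≤ potential (2, i) (s, k) := by
  have e₁ := natAbs_valMinAbs_sub_comm k i
  have e₂ : (k - (i + 1)).valMinAbs.natAbs = (i - k + 1).valMinAbs.natAbs := by
    rw [natAbs_valMinAbs_sub_comm, add_sub_right_comm]
  rcases min_choice (i - k).valMinAbs.natAbs (i - k + 1).valMinAbs.natAbs with h | h
  · refine ⟨(1, i), (adj_bc i).symm, ?_⟩
    simp only [potential, Nat.dist, bridgeDist, Fin.coe_ofNat_eq_mod, Nat.reduceMod]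
    split_ifs <;> omega
  · refine ⟨(1, i + 1), (adj_bc_succ i).symm, ?_⟩
    simp only [potential, Nat.dist, bridgeDist, Fin.coe_ofNat_eq_mod, Nat.reduceMod]
    split_ifs <;> omega

lemma exists_adj_potential_lt_of_fst_ne {r s : Fin 4} (hrs : r ≠ s) (i k : ZMod n) :
    ∃ w, (S2Graph n).Adj (r, i) w ∧ potential w (s, k) + 1 ≤ potential (r, i) (s, k) := by
  fin_cases r
  · exact ⟨(1, i), adj_ab i, by fin_cases s <;> simp_all [potential, Nat.dist]⟩
  · rcases (show s = 0 ∨ 2 ≤ s.val by fin_cases s <;> simp_all) with rfl | hs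
    · exact ⟨(0, i), (adj_ab i).symm, by simp [potential, Nat.dist]⟩
    · exact exists_adj_potential_lt_of_b hs i k
  · rcases (show s = 3 ∨ s.val < 2 by fin_cases s <;> simp_all) with rfl | hs
    · exact ⟨(3, i), adj_cd i, by simp [potential, Nat.dist]⟩
    · exact exists_adj_potential_lt_of_c hs i k
  · exact ⟨(2, i), (adj_cd i).symm, by fin_cases s <;> simp_all [potential, Nat.dist]⟩

lemma exists_potential_b_eq_b (i j : ZMod n) :
    ∃ x : Fin 4 × ZMod n, (x.1 = 0 ∨ x.1 = 2) ∧ potential (1, i) x = potential (1, j) x := by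
  obtain ⟨c, h | h⟩ := exists_eq_add_self_or_eq_add_self_add_one (j - i)
  · refine ⟨(0, i + c), Or.inl rfl, ?_⟩
    rw [potential_b_a, potential_b_a, show i + c - j = -c by linear_combination -h,
      natAbs_valMinAbs_neg, add_sub_cancel_left]
  · refine ⟨(2, i + c), Or.inr rfl, ?_⟩
    rw [potential_b_c, potential_b_c, show i + c - j = -c - 1 by linear_combination -h,
      bridgeDist_neg_sub_one, add_sub_cancel_left]

lemma exists_potential_d_eq_d (i j : ZMod n) :
    ∃ x : Fin 4 × ZMod n, (x.1 = 0 ∨ x.1 = 2) ∧ potential (3, i) x = potential (3, j) x := by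
  obtain ⟨c, h | h⟩ := exists_eq_add_self_or_eq_add_self_add_one (j - i)
  · refine ⟨(2, i + c), Or.inr rfl, ?_⟩
    rw [potential_d_c, potential_d_c, show i + c - j = -c by linear_combination -h,
      natAbs_valMinAbs_neg, add_sub_cancel_left]
  · refine ⟨(0, i + c + 1), Or.inl rfl, ?_⟩
    rw [potential_d_a, potential_d_a, show i - (i + c + 1) = -c - 1 by ring,
      show j - (i + c + 1) = c by linear_combination h, bridgeDist_neg_sub_one]

section NeZero

variable [NeZero n]

lemma dist_bridgeDist_add_one_le (t : ZMod n) :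
    Nat.dist (bridgeDist (t + 1)) (bridgeDist t) ≤ 1 := by
  have := dist_natAbs_valMinAbs_add_one_le t
  have := dist_natAbs_valMinAbs_add_one_le (t + 1)
  simp only [bridgeDist, Nat.dist] at *
  omega

lemma dist_potential_row_le (r : Fin 4) (i : ZMod n) (v : Fin 4 × ZMod n) :
    Nat.dist (potential (r, i) v) (potential (r, i + 1) v) ≤ 1 := by
  obtain ⟨s, k⟩ := v
  have e₁ : k - i = k - (i + 1) + 1 := by ring
  have e₂ : i + 1 - k = i - k + 1 := by ring
  have := dist_natAbs_valMinAbs_add_one_le (k - (i + 1))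
  have := dist_bridgeDist_add_one_le (k - (i + 1))
  have := dist_bridgeDist_add_one_le (i - k)
  simp only [potential, e₁, e₂]
  split_ifs <;> simp only [Nat.dist] at * <;> omega

lemma dist_potential_bc_le (i : ZMod n) (v : Fin 4 × ZMod n) :
    Nat.dist (potential (1, i) v) (potential (2, i) v) ≤ 1 := by
  obtain ⟨s, k⟩ := v
  have e₁ := natAbs_valMinAbs_sub_comm i k
  have e₂ : (i - k + 1).valMinAbs.natAbs = (k - i - 1).valMinAbs.natAbs := by
    rw [← natAbs_valMinAbs_neg, neg_add', neg_sub]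
  have := dist_natAbs_valMinAbs_add_one_le (k - i)
  have := dist_natAbs_valMinAbs_add_one_le (k - i - 1)
  rw [sub_add_cancel] at this
  simp only [potential, bridgeDist, e₁, e₂]
  split_ifs <;> simp only [Nat.dist] at * <;> omega

lemma dist_potential_bc_succ_le (i : ZMod n) (v : Fin 4 × ZMod n) :
    Nat.dist (potential (1, i + 1) v) (potential (2, i) v) ≤ 1 := by
  obtain ⟨s, k⟩ := v
  have e₁ := natAbs_valMinAbs_sub_comm i k
  have e₂ : (i - k + 1).valMinAbs.natAbs = (k - i - 1).valMinAbs.natAbs := by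
    rw [← natAbs_valMinAbs_neg, neg_add', neg_sub]
  have e₃ : k - (i + 1) = k - i - 1 := by ring
  have := dist_natAbs_valMinAbs_add_one_le (k - i - 1)
  rw [sub_add_cancel] at this
  simp only [potential, bridgeDist, e₁, e₂, e₃, sub_add_cancel]
  split_ifs <;> simp only [Nat.dist] at * <;> omega

lemma dist_potential_le_one_of_adj {u w : Fin 4 × ZMod n} (h : (S2Graph n).Adj u w)
    (v : Fin 4 × ZMod n) : Nat.dist (potential u v) (potential w v) ≤ 1 := by
  obtain ⟨r, i⟩ := u
  obtain ⟨r', i'⟩ := w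
  rw [S2Graph, SimpleGraph.fromRel_adj] at h
  obtain ⟨-, h | h⟩ := h
  on_goal 2 => rw [Nat.dist_comm]
  all_goals
    rcases h with ⟨rfl, rfl⟩ | ⟨rfl, rfl, rfl⟩ | ⟨rfl, rfl, rfl⟩ | ⟨rfl, rfl, rfl⟩ | ⟨rfl, rfl, rfl⟩
    exacts [dist_potential_row_le _ _ v, (dist_potential_ab _ v).le, dist_potential_bc_le _ v,
      (dist_potential_cd _ v).le, dist_potential_bc_succ_le _ v]

lemma exists_adj_potential_lt_of_fst_eq [Fact (1 < n)] (r : Fin 4) {i k : ZMod n}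
    (hik : i ≠ k) :
    ∃ w, (S2Graph n).Adj (r, i) w ∧ potential w (r, k) + 1 ≤ potential (r, i) (r, k) := by
  rcases natAbs_valMinAbs_sub_one_or_add_one (sub_ne_zero.2 hik.symm) with h | h
  · refine ⟨(r, i + 1), adj_row r i, ?_⟩
    simp [potential, ← h, sub_add_eq_sub_sub]
  · have hadj := (adj_row r (i - 1)).symm
    rw [sub_add_cancel] at hadj
    refine ⟨(r, i - 1), hadj, ?_⟩
    simp [potential, ← h, sub_sub_eq_add_sub, add_sub_right_comm]

theorem dist_eq_potential [Fact (1 < n)] (u v : Fin 4 × ZMod n) :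
    (S2Graph n).dist u v = potential u v := by
  refine SimpleGraph.dist_eq_of_lipschitz_of_descent potential_self (fun u w v h => ?_)
    (fun ⟨r, i⟩ ⟨s, k⟩ huv => ?_) u v
  · have := dist_potential_le_one_of_adj h v
    unfold Nat.dist at this
    omega
  · rcases eq_or_ne r s with rfl | hrs
    · exact exists_adj_potential_lt_of_fst_eq r fun hik => huv (hik ▸ rfl)
    · exact exists_adj_potential_lt_of_fst_ne hrs i k

/-- Write `n = 2N`. If `j - i = 2c`, the midpoint `c_{i + c}` works because `c < N`; if
`j - i = 2c + 1`, the vertex `c_{j + N - c - 1}` opposite the midpoint is at horizontal distance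
`N - c - 1` from both. -/
lemma exists_potential_b_eq_d (hn : Even n) (i j : ZMod n) :
    ∃ x : Fin 4 × ZMod n, (x.1 = 0 ∨ x.1 = 2) ∧ potential (1, i) x = potential (3, j) x := by
  obtain ⟨N, rfl⟩ := hn
  have ht := natCast_zmod_val (j - i)
  have hlt := (j - i).val_lt
  obtain ⟨c, hc | hc⟩ := Nat.even_or_odd' (j - i).val <;> rw [hc] at ht hlt
  · refine ⟨(2, i + c), Or.inr rfl, ?_⟩
    push_cast at ht
    have h₁ := natAbs_valMinAbs_natCast (n := N + N) (m := c) (by omega)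
    have h₂ := natAbs_valMinAbs_natCast (n := N + N) (m := c + 1) (by omega)
    rw [Nat.cast_succ] at h₂
    rw [potential_b_c, potential_d_c, bridgeDist, add_sub_cancel_left,
      show i + c - j = -c by linear_combination ht, natAbs_valMinAbs_neg, h₁, h₂]
    omega
  · refine ⟨(2, j + (N - c - 1 : ℕ)), Or.inr rfl, ?_⟩
    have e : j + ((N - c - 1 : ℕ) : ZMod (N + N)) - i = ((N + c : ℕ) : ZMod (N + N)) := by
      rw [add_sub_right_comm, ← ht, ← Nat.cast_add]
      congr 1
      omega
    have h₁ := natAbs_valMinAbs_natCast (n := N + N) (m := N + c) (by omega)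
    have h₂ := natAbs_valMinAbs_natCast (n := N + N) (m := N + c + 1) (by omega)
    have h₃ := natAbs_valMinAbs_natCast (n := N + N) (m := N - c - 1) (by omega)
    rw [Nat.cast_succ] at h₂
    rw [potential_b_c, potential_d_c, bridgeDist, e, add_sub_cancel_left, h₁, h₂, h₃]
    omega

variable [Fact (1 < n)]

theorem isDistEqSet_a_c (hn : Even n) :
    IsDistEqSet (S2Graph n) {x : Fin 4 × ZMod n | x.1 = 0 ∨ x.1 = 2} := by
  rintro ⟨r, i⟩ ⟨s, j⟩ hu hv -
  simp only [dist_eq_potential]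
  have hr : r = 1 ∨ r = 3 := by fin_cases r <;> simp_all
  have hs : s = 1 ∨ s = 3 := by fin_cases s <;> simp_all
  rcases hr with rfl | rfl <;> rcases hs with rfl | rfl
  · exact exists_potential_b_eq_b i j
  · exact exists_potential_b_eq_d hn i j
  · obtain ⟨x, hx, h⟩ := exists_potential_b_eq_d hn j i
    exact ⟨x, hx, h.symm⟩
  · exact exists_potential_d_eq_d i j

theorem two_mul_le_card_of_isDistEqSet {S : Finset (Fin 4 × ZMod n)}
    (hS : IsDistEqSet (S2Graph n) S) : 2 * n ≤ S.card := by
  have hab (i : ZMod n) : (0, i) ∈ S ∨ (1, i) ∈ S := hS.mem_or_mem_s17 fun x h => by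
    have := dist_potential_ab i x
    rw [dist_eq_potential, dist_eq_potential] at h
    simp [h] at this
  have hcd (i : ZMod n) : (2, i) ∈ S ∨ (3, i) ∈ S := hS.mem_or_mem_s17 fun x h => by
    have := dist_potential_cd i x
    rw [dist_eq_potential, dist_eq_potential] at h
    simp [h] at this
  have hsurj : Set.SurjOn (fun x : Fin 4 × ZMod n => (decide (x.1.val < 2), x.2)) S
      (Finset.univ : Finset (Bool × ZMod n)) := by
    rintro ⟨_ | _, i⟩ -
    · rcases hcd i with h | h
      exacts [⟨_, h, rfl⟩, ⟨_, h, rfl⟩]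
    · rcases hab i with h | h
      exacts [⟨_, h, rfl⟩, ⟨_, h, rfl⟩]
  simpa [ZMod.card] using Finset.card_le_card_of_surjOn _ hsurj

end NeZero

end S2Graph

theorem stmt17 (n : ℕ) (hn : 6 ≤ n) (hev : Even n) :
    IsDistEqSet (S2Graph n) {x : Fin 4 × ZMod n | x.1 = 0 ∨ x.1 = 2} ∧
    eqdim (S2Graph n) = 2 * n := by
  have : NeZero n := ⟨by omega⟩
  have : Fact (1 < n) := ⟨by omega⟩
  have hS := S2Graph.isDistEqSet_a_c hev
  let S : Finset (Fin 4 × ZMod n) := {0, 2} ×ˢ Finset.univ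
  have hcoe : (S : Set (Fin 4 × ZMod n)) = {x | x.1 = 0 ∨ x.1 = 2} := by ext; simp [S]
  have hcard : S.card = 2 * n := by simp [S, ZMod.card]
  refine ⟨hS, ?_⟩
  rw [← hcard]
  refine IsDistEqSet.eqdim_eq (hcoe ▸ hS) fun T hT => ?_
  rw [hcard]
  exact S2Graph.two_mul_le_card_of_isDistEqSet hT
end
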